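/- arXiv:2304.08554 — 5 statements merged into one kernel-verified Lean document; each statement's English description precedes it below -/
import Mathlib

section
/- There exist constants C > 0 and c > 0 such that for all t ≥ 1 and all x, u ∈ ℝ, |∂K_t(x,u)/∂t| ≤ C e^{x²/2} exp(−c (e^{−t}u − x)²) (e^{−t}|u| + e^{−2t}). -/
/-!
Differentiating in `t`, with `a = e^{-t}`, `v = 1 - e^{-2t}` and `D = a u - x`, gives
`∂ₜK = K · (-a²/v + a u D / v + D² a² / v²)`. For `t ≥ 1` we have `1/2 ≤ v ≤ 1`, so
`K ≤ 2 e^{x²/2} e^{-D²/2}` and the bracket is `O(a² + a|u||D| + a² D²)`; the polynomial factors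
`|D|` and `D²` are then absorbed by giving up half of the Gaussian exponent.
-/

open Real MeasureTheory Set

/-- The Mehler kernel of the one-dimensional Ornstein--Uhlenbeck semigroup. -/
noncomputable def mehlerK (t x u : ℝ) : ℝ :=
  Real.exp (x ^ 2 / 2) / Real.sqrt (1 - Real.exp (-2 * t)) *
    Real.exp (-(Real.exp (-t) * u - x) ^ 2 / (2 * (1 - Real.exp (-2 * t))))

theorem sq_mul_exp_neg_mul_sq_le (y b : ℝ) {ε : ℝ} (hε : 0 < ε) :
    y ^ 2 * rexp (-b * y ^ 2) ≤ ε⁻¹ * rexp (-(b - ε) * y ^ 2) := by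
  have hy : y ^ 2 ≤ ε⁻¹ * rexp (ε * y ^ 2) := by
    rw [le_inv_mul_iff₀ hε]
    linarith [add_one_le_exp (ε * y ^ 2)]
  calc y ^ 2 * rexp (-b * y ^ 2) ≤ ε⁻¹ * rexp (ε * y ^ 2) * rexp (-b * y ^ 2) := by gcongr
    _ = ε⁻¹ * rexp (-(b - ε) * y ^ 2) := by rw [mul_assoc, ← exp_add]; ring_nf

theorem abs_mul_exp_neg_mul_sq_le (y b : ℝ) {ε : ℝ} (hε : 0 < ε) :
    |y| * rexp (-b * y ^ 2) ≤ (1 + ε⁻¹) * rexp (-(b - ε) * y ^ 2) := by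
  have hy : |y| ≤ 1 + y ^ 2 := by nlinarith [sq_abs y, abs_nonneg y]
  have hexp : rexp (-b * y ^ 2) ≤ rexp (-(b - ε) * y ^ 2) := by
    gcongr; nlinarith [sq_nonneg y]
  calc |y| * rexp (-b * y ^ 2) ≤ (1 + y ^ 2) * rexp (-b * y ^ 2) := by gcongr
    _ = rexp (-b * y ^ 2) + y ^ 2 * rexp (-b * y ^ 2) := by ring
    _ ≤ rexp (-(b - ε) * y ^ 2) + ε⁻¹ * rexp (-(b - ε) * y ^ 2) :=
      add_le_add hexp (sq_mul_exp_neg_mul_sq_le y b hε)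
    _ = (1 + ε⁻¹) * rexp (-(b - ε) * y ^ 2) := by ring

theorem div_sqrt_mul_exp_le {E v : ℝ} (D : ℝ) (hE : 0 ≤ E) (hv : 1 / 2 ≤ v) (hv1 : v ≤ 1) :
    E / √v * rexp (-D ^ 2 / (2 * v)) ≤ 2 * E * rexp (-(1 / 2) * D ^ 2) := by
  have hS : 1 / 2 ≤ √v := (le_sqrt (by norm_num) (by linarith)).2 (by linarith)
  have hE' : E / √v ≤ 2 * E := by
    rw [div_le_iff₀ (by linarith)]; nlinarith
  have hexp : rexp (-D ^ 2 / (2 * v)) ≤ rexp (-(1 / 2) * D ^ 2) := by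
    rw [exp_le_exp, neg_div, neg_mul, neg_le_neg_iff, le_div_iff₀ (by linarith)]
    nlinarith [sq_nonneg D]
  gcongr

theorem abs_mehler_log_deriv_le {a w v : ℝ} (u D : ℝ) (ha : 0 ≤ a) (hw : 0 ≤ w)
    (hv : 1 / 2 ≤ v) :
    |-w / v + a * u * D / v + D ^ 2 * w / v ^ 2| ≤ 2 * w + 2 * a * |u| * |D| + 4 * D ^ 2 * w := by
  have hv0 : 0 < v := by linarith
  have hinv : v⁻¹ ≤ 2 := by rw [inv_le_comm₀ hv0 (by norm_num)]; linarith
  have hinv2 : (v ^ 2)⁻¹ ≤ 4 := by rw [← inv_pow]; nlinarith [inv_nonneg.2 hv0.le]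
  calc |-w / v + a * u * D / v + D ^ 2 * w / v ^ 2|
      ≤ |-w / v| + |a * u * D / v| + |D ^ 2 * w / v ^ 2| := abs_add_three _ _ _
    _ = w * v⁻¹ + a * |u| * |D| * v⁻¹ + D ^ 2 * w * (v ^ 2)⁻¹ := by
      simp only [div_eq_mul_inv, abs_mul, abs_neg, abs_inv, abs_pow, sq_abs, abs_of_nonneg ha,
        abs_of_nonneg hw, abs_of_pos hv0]
    _ ≤ w * 2 + a * |u| * |D| * 2 + D ^ 2 * w * 4 := by gcongr
    _ = 2 * w + 2 * a * |u| * |D| + 4 * D ^ 2 * w := by ring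

-- With `E = e^{x²/2}`, `a = e^{-t}`, `w = e^{-2t}`, `v = 1 - w`, `D = a u - x`, the left-hand side
-- is `|∂ₜ mehlerK t x u|`.
theorem abs_mehler_deriv_le {E a w v : ℝ} (u D : ℝ) (hE : 0 ≤ E) (ha : 0 ≤ a) (hw : 0 ≤ w)
    (hv : 1 / 2 ≤ v) (hv1 : v ≤ 1) :
    |E / √v * rexp (-D ^ 2 / (2 * v)) * (-w / v + a * u * D / v + D ^ 2 * w / v ^ 2)| ≤
      36 * E * rexp (-(1 / 4) * D ^ 2) * (a * |u| + w) := by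
  have hD : |D| * rexp (-(1 / 2) * D ^ 2) ≤ 5 * rexp (-(1 / 4) * D ^ 2) :=
    (abs_mul_exp_neg_mul_sq_le D _ (ε := 1 / 4) (by norm_num)).trans_eq (by norm_num)
  have hD2 : D ^ 2 * rexp (-(1 / 2) * D ^ 2) ≤ 4 * rexp (-(1 / 4) * D ^ 2) :=
    (sq_mul_exp_neg_mul_sq_le D _ (ε := 1 / 4) (by norm_num)).trans_eq (by norm_num)
  have hdecay : rexp (-(1 / 2) * D ^ 2) ≤ rexp (-(1 / 4) * D ^ 2) := by
    gcongr; nlinarith [sq_nonneg D]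
  rw [abs_mul, abs_of_nonneg (by positivity)]
  calc _ ≤ 2 * E * rexp (-(1 / 2) * D ^ 2) * (2 * w + 2 * a * |u| * |D| + 4 * D ^ 2 * w) :=
        mul_le_mul (div_sqrt_mul_exp_le D hE hv hv1) (abs_mehler_log_deriv_le u D ha hw hv)
          (abs_nonneg _) (by positivity)
    _ = 4 * E * (w * rexp (-(1 / 2) * D ^ 2) + a * |u| * (|D| * rexp (-(1 / 2) * D ^ 2))
          + 2 * w * (D ^ 2 * rexp (-(1 / 2) * D ^ 2))) := by ring
    _ ≤ 4 * E * (w * rexp (-(1 / 4) * D ^ 2) + a * |u| * (5 * rexp (-(1 / 4) * D ^ 2))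
          + 2 * w * (4 * rexp (-(1 / 4) * D ^ 2))) := by gcongr
    _ ≤ 36 * E * rexp (-(1 / 4) * D ^ 2) * (a * |u| + w) := by
      have : 0 ≤ E * rexp (-(1 / 4) * D ^ 2) * (a * |u|) := by positivity
      nlinarith

theorem hasDerivAt_mehlerK (x u : ℝ) {t : ℝ} (ht : 0 < t) :
    HasDerivAt (fun s => mehlerK s x u)
      (mehlerK t x u *
        (-rexp (-2 * t) / (1 - rexp (-2 * t))
          + rexp (-t) * u * (rexp (-t) * u - x) / (1 - rexp (-2 * t))
          + (rexp (-t) * u - x) ^ 2 * rexp (-2 * t) / (1 - rexp (-2 * t)) ^ 2)) t := by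
  have hv : 0 < 1 - rexp (-2 * t) := by
    rw [sub_pos, Real.exp_lt_one_iff]; linarith
  have hS : 0 < √(1 - rexp (-2 * t)) := sqrt_pos.mpr hv
  have hvar : HasDerivAt (fun s => 1 - rexp (-2 * s)) (2 * rexp (-2 * t)) t :=
    (((hasDerivAt_id t).const_mul (-2)).exp.const_sub 1).congr_deriv (by simp; ring)
  have hmean : HasDerivAt (fun s => rexp (-s) * u - x) (-(rexp (-t) * u)) t :=
    ((hasDerivAt_neg t).exp.mul_const u).sub_const x |>.congr_deriv (by ring)
  have hexponent : HasDerivAt (fun s => -(rexp (-s) * u - x) ^ 2 / (2 * (1 - rexp (-2 * s))))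
      _ t := (hmean.fun_pow 2).fun_neg.fun_div (hvar.const_mul 2) (by positivity)
  have hprefactor : HasDerivAt (fun s => rexp (x ^ 2 / 2) / √(1 - rexp (-2 * s))) _ t :=
    (hasDerivAt_const t (rexp (x ^ 2 / 2))).fun_div (hvar.sqrt hv.ne') hS.ne'
  refine (hprefactor.fun_mul hexponent.exp).congr_deriv ?_
  have hsq := sq_sqrt hv.le
  unfold mehlerK
  generalize √(1 - rexp (-2 * t)) = S at hS hsq ⊢
  generalize rexp (-2 * t) = w at hv hsq ⊢
  obtain rfl : w = 1 - S ^ 2 := by linarith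
  field_simp
  ring

theorem mehler_time_deriv_bound_large_t :
    ∃ C > (0:ℝ), ∃ c > (0:ℝ), ∀ t ≥ (1:ℝ), ∀ x u : ℝ,
      |deriv (fun s => mehlerK s x u) t| ≤
        C * Real.exp (x ^ 2 / 2) * Real.exp (-c * (Real.exp (-t) * u - x) ^ 2) *
          (Real.exp (-t) * |u| + Real.exp (-2 * t)) := by
  refine ⟨36, by norm_num, 1 / 4, by norm_num, fun t ht x u => ?_⟩
  have hw : rexp (-2 * t) ≤ 1 / 2 :=
    (exp_le_exp.2 (by linarith)).trans exp_neg_one_lt_half.le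
  rw [(hasDerivAt_mehlerK x u (show 0 < t by linarith)).deriv]
  exact abs_mehler_deriv_le u _ (exp_pos _).le (exp_pos _).le (exp_pos _).le (by linarith)
    (by linarith [exp_pos (-2 * t)])
end

section
/- There is a constant C such that for all x, u ∈ ℝ and all t ∈ (0,1], if |x − u| > 1/(2(1+|x|)) then K_t(x,u) ≤ C e^{x²/2}(1 + |x|). -/
open Real MeasureTheory Set

lemma mehler_aux_key (a d : ℝ) (ha : 0 < a) (hd : d ≠ 0) :
    Real.exp (-d ^ 2 / (2 * a)) / Real.sqrt a ≤ 1 / |d| := by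
  rw [div_le_div_iff₀ (Real.sqrt_pos.mpr ha) (abs_pos.mpr hd)]
  have h1 : |d| ≤ Real.sqrt a * Real.exp (d ^ 2 / (2 * a)) := by
    have hz : d ^ 2 ≤ a * Real.exp (d ^ 2 / a) := by
      have h2 : d ^ 2 / a + 1 ≤ Real.exp (d ^ 2 / a) := Real.add_one_le_exp _
      have h3 : d ^ 2 / a * a = d ^ 2 := div_mul_cancel₀ _ ha.ne'
      nlinarith [ha]
    have h4 : |d| = Real.sqrt (d ^ 2) := (Real.sqrt_sq_eq_abs d).symm
    rw [h4]
    have h5 : Real.sqrt (d ^ 2) ≤ Real.sqrt (a * Real.exp (d ^ 2 / a)) :=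
      Real.sqrt_le_sqrt hz
    have h6 : Real.exp (d ^ 2 / a) = Real.exp (d ^ 2 / (2 * a)) ^ 2 := by
      rw [← Real.exp_nat_mul]; congr 1; push_cast; field_simp
    calc Real.sqrt (d ^ 2) ≤ Real.sqrt (a * Real.exp (d ^ 2 / a)) := h5
      _ = Real.sqrt a * Real.exp (d ^ 2 / (2 * a)) := by
          rw [h6, Real.sqrt_mul ha.le, Real.sqrt_sq (Real.exp_pos _).le]
  calc Real.exp (-d ^ 2 / (2 * a)) * |d|
      ≤ Real.exp (-d ^ 2 / (2 * a)) * (Real.sqrt a * Real.exp (d ^ 2 / (2 * a))) := by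
        exact mul_le_mul_of_nonneg_left h1 (Real.exp_pos _).le
    _ = Real.sqrt a * (Real.exp (-d ^ 2 / (2 * a)) * Real.exp (d ^ 2 / (2 * a))) := by ring
    _ = Real.sqrt a := by
        rw [← Real.exp_add, show -d ^ 2 / (2 * a) + d ^ 2 / (2 * a) = 0 by ring,
          Real.exp_zero, mul_one]
    _ ≤ 1 * Real.sqrt a := by rw [one_mul]

set_option maxHeartbeats 800000 in
theorem mehler_kernel_global_bound_small_t :
    ∃ C > (0:ℝ), ∀ x u : ℝ, ∀ t ∈ Set.Ioc (0:ℝ) 1,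
      |x - u| > 1 / (2 * (1 + |x|)) →
        mehlerK t x u ≤ C * Real.exp (x ^ 2 / 2) * (1 + |x|) := by
  refine ⟨4 * Real.exp 1, by positivity, ?_⟩
  intro x u t ht hxu
  obtain ⟨ht0, ht1⟩ := ht
  have hE : (1:ℝ) ≤ Real.exp 1 := by
    have := Real.add_one_le_exp (1:ℝ); linarith
  set s := Real.exp (-t) with hs
  have hs0 : 0 < s := Real.exp_pos _
  have hs1 : s < 1 := by
    rw [hs, Real.exp_lt_one_iff]; linarith
  have hse : 1 ≤ Real.exp 1 * s := by
    rw [hs, ← Real.exp_add]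
    have : (0:ℝ) ≤ 1 + -t := by linarith
    calc (1:ℝ) = Real.exp 0 := (Real.exp_zero).symm
      _ ≤ Real.exp (1 + -t) := Real.exp_le_exp.mpr this
  have h2t : Real.exp (-2 * t) = s ^ 2 := by
    rw [hs, sq, ← Real.exp_add]; ring_nf
  set a := 1 - Real.exp (-2 * t) with haa
  have ha0 : 0 < a := by
    rw [haa, h2t]; nlinarith
  have hx1 : (0:ℝ) < 1 + |x| := by positivity
  set d := s * u - x with hd
  have hmehler : mehlerK t x u = Real.exp (x ^ 2 / 2) / Real.sqrt a * Real.exp (-d ^ 2 / (2 * a)) := rfl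
  by_cases hcase : 1 / (4 * Real.exp 1 * (1 + |x|)) ≤ |d|
  · -- large |d| case
    have hdne : d ≠ 0 := by
      intro h0
      rw [h0, abs_zero] at hcase
      have : 0 < 1 / (4 * Real.exp 1 * (1 + |x|)) := by positivity
      linarith
    have hkey := mehler_aux_key a d ha0 hdne
    have hinv : 1 / |d| ≤ 4 * Real.exp 1 * (1 + |x|) := by
      rw [div_le_iff₀ (abs_pos.mpr hdne)]
      have hc : (0:ℝ) ≤ 4 * Real.exp 1 * (1 + |x|) := by positivity
      have h := mul_le_mul_of_nonneg_left hcase hc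
      have h1 : 4 * Real.exp 1 * (1 + |x|) * (1 / (4 * Real.exp 1 * (1 + |x|))) = 1 := by
        field_simp
      linarith
    rw [hmehler]
    have hexp : 0 < Real.exp (x ^ 2 / 2) := Real.exp_pos _
    calc Real.exp (x ^ 2 / 2) / Real.sqrt a * Real.exp (-d ^ 2 / (2 * a))
        = Real.exp (x ^ 2 / 2) * (Real.exp (-d ^ 2 / (2 * a)) / Real.sqrt a) := by ring
      _ ≤ Real.exp (x ^ 2 / 2) * (1 / |d|) := by
          exact mul_le_mul_of_nonneg_left hkey hexp.le
      _ ≤ Real.exp (x ^ 2 / 2) * (4 * Real.exp 1 * (1 + |x|)) := by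
          exact mul_le_mul_of_nonneg_left hinv hexp.le
      _ = 4 * Real.exp 1 * Real.exp (x ^ 2 / 2) * (1 + |x|) := by ring
  · -- small |d| case: a is bounded below
    push_neg at hcase
    -- (1-s) x = s (u - x) - d
    have hid : (1 - s) * x = s * (u - x) - d := by rw [hd]; ring
    have hsu : 1 / (2 * Real.exp 1 * (1 + |x|)) < s * |u - x| := by
      have h1 : 1 / (2 * (1 + |x|)) < |u - x| := by rwa [abs_sub_comm] at hxu
      have h2 : 1 / (2 * Real.exp 1 * (1 + |x|)) = (1 / Real.exp 1) * (1 / (2 * (1 + |x|))) := by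
        field_simp
      rw [h2]
      have h3 : 1 / Real.exp 1 ≤ s := by
        rw [div_le_iff₀ (Real.exp_pos 1)]
        nlinarith
      have h4 : (0:ℝ) < 1 / Real.exp 1 := by positivity
      calc (1 / Real.exp 1) * (1 / (2 * (1 + |x|))) < (1 / Real.exp 1) * |u - x| := by
            exact mul_lt_mul_of_pos_left h1 h4
        _ ≤ s * |u - x| := by
            apply mul_le_mul_of_nonneg_right h3 (abs_nonneg _)
    have habs : s * |u - x| - |d| ≤ (1 - s) * |x| := by
      have h1 : |(1 - s) * x| = (1 - s) * |x| := by
        rw [abs_mul, abs_of_nonneg (by linarith : (0:ℝ) ≤ 1 - s)]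
      have h2 : |s * (u - x)| = s * |u - x| := by
        rw [abs_mul, abs_of_pos hs0]
      calc s * |u - x| - |d| = |s * (u - x)| - |d| := by rw [h2]
        _ ≤ |s * (u - x) - d| := by
            exact abs_sub_abs_le_abs_sub _ _ |>.trans_eq rfl
        _ = |(1 - s) * x| := by rw [hid]
        _ = (1 - s) * |x| := h1
    have hlow : 1 / (4 * Real.exp 1 * (1 + |x|)) < (1 - s) * (1 + |x|) := by
      have h1 : (1 - s) * |x| ≤ (1 - s) * (1 + |x|) := by nlinarith [abs_nonneg x]
      have h2 : 1 / (2 * Real.exp 1 * (1 + |x|)) - 1 / (4 * Real.exp 1 * (1 + |x|))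
          = 1 / (4 * Real.exp 1 * (1 + |x|)) := by
        field_simp; ring
      nlinarith [hsu, hcase, habs]
    have ha_low : 1 / (4 * Real.exp 1 * (1 + |x|) ^ 2) < a := by
      have h1 : 1 - s ^ 2 = (1 - s) * (1 + s) := by ring
      have h2 : 1 - s < a := by
        rw [haa, h2t]; nlinarith
      have h3 : 1 / (4 * Real.exp 1 * (1 + |x|) ^ 2) < 1 - s := by
        rw [div_lt_iff₀ (by positivity)] at hlow ⊢
        have hring : (1 - s) * (1 + |x|) * (4 * Real.exp 1 * (1 + |x|))
            = (1 - s) * (4 * Real.exp 1 * (1 + |x|) ^ 2) := by ring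
        linarith
      linarith
    -- hence 1/√a ≤ 4e(1+|x|)
    have hsqrt : 1 / (4 * Real.exp 1 * (1 + |x|)) ≤ Real.sqrt a := by
      rw [show (1:ℝ) / (4 * Real.exp 1 * (1 + |x|)) = Real.sqrt ((1 / (4 * Real.exp 1 * (1 + |x|))) ^ 2) from (Real.sqrt_sq (by positivity)).symm]
      apply Real.sqrt_le_sqrt
      have : (1 / (4 * Real.exp 1 * (1 + |x|))) ^ 2 ≤ 1 / (4 * Real.exp 1 * (1 + |x|) ^ 2) := by
        rw [div_pow, one_pow, div_le_div_iff₀ (by positivity) (by positivity)]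
        have hE2 : 4 * Real.exp 1 ≤ 16 * (Real.exp 1 * Real.exp 1) := by nlinarith [hE]
        calc 1 * (4 * Real.exp 1 * (1 + |x|) ^ 2) = 4 * Real.exp 1 * (1 + |x|) ^ 2 := by ring
          _ ≤ 16 * (Real.exp 1 * Real.exp 1) * (1 + |x|) ^ 2 := by
              apply mul_le_mul_of_nonneg_right hE2 (by positivity)
          _ = 1 * (4 * Real.exp 1 * (1 + |x|)) ^ 2 := by ring
      linarith
    have hsq_pos : 0 < Real.sqrt a := Real.sqrt_pos.mpr ha0
    have hinva : 1 / Real.sqrt a ≤ 4 * Real.exp 1 * (1 + |x|) := by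
      rw [div_le_iff₀ hsq_pos]
      have hc : (0:ℝ) ≤ 4 * Real.exp 1 * (1 + |x|) := by positivity
      have h := mul_le_mul_of_nonneg_left hsqrt hc
      have h1 : 4 * Real.exp 1 * (1 + |x|) * (1 / (4 * Real.exp 1 * (1 + |x|))) = 1 := by
        field_simp
      have h2 : 4 * Real.exp 1 * (1 + |x|) * Real.sqrt a = Real.sqrt a * (4 * Real.exp 1 * (1 + |x|)) := by ring
      linarith
    have hexp1 : Real.exp (-d ^ 2 / (2 * a)) ≤ 1 := by
      rw [show (1:ℝ) = Real.exp 0 from (Real.exp_zero).symm]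
      apply Real.exp_le_exp.mpr
      have h0 : 0 ≤ d ^ 2 / (2 * a) := by positivity
      have heq : -d ^ 2 / (2 * a) = -(d ^ 2 / (2 * a)) := neg_div _ _
      linarith
    rw [hmehler]
    have hexp : 0 < Real.exp (x ^ 2 / 2) := Real.exp_pos _
    calc Real.exp (x ^ 2 / 2) / Real.sqrt a * Real.exp (-d ^ 2 / (2 * a))
        ≤ Real.exp (x ^ 2 / 2) / Real.sqrt a * 1 := by
          apply mul_le_mul_of_nonneg_left hexp1 (by positivity)
      _ = Real.exp (x ^ 2 / 2) * (1 / Real.sqrt a) := by ring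
      _ ≤ Real.exp (x ^ 2 / 2) * (4 * Real.exp 1 * (1 + |x|)) := by
          exact mul_le_mul_of_nonneg_left hinva hexp.le
      _ = 4 * Real.exp 1 * Real.exp (x ^ 2 / 2) * (1 + |x|) := by ring
end

section
/- Let (x_j)_{j≥0} satisfy x_0 = 0 and x_{j+1} − 1/(1+x_{j+1}) = x_j + 1/(1+x_j). Then x_j = 2√j − 1 + O(1/√j) as j → ∞; in particular (1+x_j)² = 4j + O(1). -/
open Filter Asymptotics

theorem xj_asymptotics (x : ℕ → ℝ) (h0 : x 0 = 0)
    (hgt : ∀ j, x j < x (j + 1))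
    (hrec : ∀ j, x (j + 1) - 1 / (1 + x (j + 1)) = x j + 1 / (1 + x j)) :
    (fun j : ℕ => x j - (2 * Real.sqrt j - 1)) =O[atTop] (fun j : ℕ => 1 / Real.sqrt j) ∧
      (fun j : ℕ => (1 + x j) ^ 2 - 4 * j) =O[atTop] (fun _ : ℕ => (1 : ℝ)) := by
  -- positivity of z j := 1 + x j
  have hpos : ∀ j, (1:ℝ) ≤ 1 + x j := by
    intro j
    induction j with
    | zero => simp [h0]
    | succ n ih => have := hgt n; linarith
  -- basic product identity: a*b*(b-a) = a+b with a = 1+x j, b = 1+x (j+1)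
  have heq : ∀ j, (1 + x j) * (1 + x (j+1)) * ((1 + x (j+1)) - (1 + x j))
      = (1 + x j) + (1 + x (j+1)) := by
    intro j
    have ha0 : (1 + x j) ≠ 0 := by have := hpos j; linarith
    have hb0 : (1 + x (j+1)) ≠ 0 := by have := hpos (j+1); linarith
    have h := hrec j
    field_simp at h
    nlinarith [h]
  -- key identity: (b² - a² - 4) * (a*b) = (b-a)²
  have key : ∀ j, ((1 + x (j+1))^2 - (1 + x j)^2 - 4) * ((1 + x j) * (1 + x (j+1)))
      = ((1 + x (j+1)) - (1 + x j))^2 := by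
    intro j
    linear_combination ((1 + x j) + (1 + x (j+1))) * heq j
  -- lower bound on increments: b² ≥ a² + 4
  have hlb : ∀ j, (1 + x j)^2 + 4 ≤ (1 + x (j+1))^2 := by
    intro j
    have ha := hpos j
    have hb := hpos (j+1)
    have h := key j
    nlinarith [sq_nonneg ((1 + x (j+1)) - (1 + x j)), mul_pos (by linarith : (0:ℝ) < 1 + x j) (by linarith : (0:ℝ) < 1 + x (j+1))]
  -- upper bound on increments: (b² - a² - 4) * a⁴ ≤ 4
  have hub : ∀ j, ((1 + x (j+1))^2 - (1 + x j)^2 - 4) * (1 + x j)^4 ≤ 4 := by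
    intro j
    set a := 1 + x j with haa
    set b := 1 + x (j+1) with hbb
    have ha := hpos j
    have hb := hpos (j+1)
    have hab : a < b := by have := hgt j; simp only [haa, hbb]; linarith
    have h := key j
    have h2 := heq j
    -- a*(b-a) ≤ 2 : from a*b*(b-a) = a+b ≤ 2b
    have hbpos : (0:ℝ) < b := by linarith
    have hapos : (0:ℝ) < a := by linarith
    have h4 : a * (b - a) * b = a + b := by linear_combination h2
    have h3 : a * (b - a) ≤ 2 := by nlinarith [h4]
    have hD : 0 ≤ b^2 - a^2 - 4 := by
      nlinarith [h, sq_nonneg (b - a), mul_pos hapos hbpos]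
    have ha4 : a^4 ≤ a^3 * b := by nlinarith [pow_pos hapos 3]
    calc (b^2 - a^2 - 4) * a^4 ≤ (b^2 - a^2 - 4) * (a^3 * b) :=
          mul_le_mul_of_nonneg_left ha4 hD
      _ = a^2 * ((b^2 - a^2 - 4) * (a * b)) := by ring
      _ = a^2 * (b - a)^2 := by rw [h]
      _ = (a * (b - a))^2 := by ring
      _ ≤ 4 := by nlinarith [h3, mul_nonneg hapos.le (by linarith : (0:ℝ) ≤ b - a)]
  -- lower bound: 4j+1 ≤ z j²
  have hL : ∀ j : ℕ, 4*(j:ℝ) + 1 ≤ (1 + x j)^2 := by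
    intro j
    induction j with
    | zero => simp [h0]
    | succ n ih =>
      have := hlb n
      push_cast
      push_cast at ih
      linarith
  -- upper bound with telescoping correction
  have hU : ∀ j : ℕ, (1 + x (j+1))^2 ≤ 4*(j:ℝ) + 10 - 1/(4*(j:ℝ)+1) := by
    intro j
    induction j with
    | zero =>
      have h := hub 0
      rw [h0] at h
      norm_num at h
      norm_num
      linarith
    | succ n ih =>
      have hL1 := hL (n+1)
      push_cast at hL1 ih ⊢
      set z1 := 1 + x (n+1) with hz1
      set z2 := 1 + x (n+2) with hz2
      have hz1p : (1:ℝ) ≤ z1 := hpos (n+1)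
      have hp : (0:ℝ) < 4*(n:ℝ)+1 := by positivity
      have hq : (0:ℝ) < 4*(n:ℝ)+5 := by positivity
      have h1 : z2^2 - z1^2 - 4 ≤ 4 / z1^4 := by
        rw [le_div_iff₀ (by positivity)]
        exact hub (n+1)
      have hz14 : (4*(n:ℝ)+5)^2 ≤ z1^4 := by nlinarith [hL1, hq, sq_nonneg z1]
      have h2 : 4 / z1^4 ≤ 4 / (4*(n:ℝ)+5)^2 :=
        div_le_div_of_nonneg_left (by norm_num) (by positivity) hz14
      have h3 : (4:ℝ) / (4*(n:ℝ)+5)^2 ≤ 1/(4*(n:ℝ)+1) - 1/(4*(n:ℝ)+5) := by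
        have he : 1/(4*(n:ℝ)+1) - 1/(4*(n:ℝ)+5) = 4 / ((4*(n:ℝ)+1) * (4*(n:ℝ)+5)) := by
          field_simp
          ring
        rw [he]
        exact div_le_div_of_nonneg_left (by norm_num) (by positivity) (by nlinarith)
      have hcast : 4*((n:ℝ)+1)+1 = 4*(n:ℝ)+5 := by ring
      rw [hcast]
      linarith
  -- global upper bound: z j² ≤ 4j + 6 for j ≥ 1
  have hB : ∀ j : ℕ, 1 ≤ j → (1 + x j)^2 ≤ 4*(j:ℝ) + 6 := by
    intro j hj
    obtain ⟨k, rfl⟩ := Nat.exists_eq_add_of_le hj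
    rw [Nat.add_comm 1 k]
    have h := hU k
    have hp : (0:ℝ) < 1/(4*(k:ℝ)+1) := by positivity
    push_cast at h ⊢
    linarith
  constructor
  · -- first big-O
    rw [isBigO_iff]
    refine ⟨3, ?_⟩
    filter_upwards [eventually_ge_atTop 1] with j hj
    have hj1 : (1:ℝ) ≤ (j:ℝ) := by exact_mod_cast hj
    set s := Real.sqrt j with hs
    have hs1 : (1:ℝ) ≤ s := by
      rw [hs, show (1:ℝ) = Real.sqrt 1 by simp]
      exact Real.sqrt_le_sqrt hj1
    have hs2 : s^2 = (j:ℝ) := Real.sq_sqrt (by positivity)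
    have hz := hpos j
    have h1 := hL j
    have h2 := hB j hj
    have hzs : 2*s ≤ 1 + x j := by nlinarith
    have hgoal : x j - (2*s - 1) ≤ 3 / s := by
      rw [le_div_iff₀ (by linarith)]
      nlinarith
    have hgoal2 : (0:ℝ) ≤ x j - (2*s - 1) := by linarith
    have hnorm : ‖(1:ℝ)/s‖ = 1/s := by
      rw [Real.norm_eq_abs, abs_of_pos (by positivity)]
    rw [Real.norm_eq_abs, abs_of_nonneg hgoal2, hnorm]
    rw [div_eq_mul_one_div 3 s] at hgoal
    linarith [hgoal]
  · -- second big-O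
    rw [isBigO_iff]
    refine ⟨6, ?_⟩
    filter_upwards [eventually_ge_atTop 1] with j hj
    have h1 := hL j
    have h2 := hB j hj
    rw [Real.norm_eq_abs, Real.norm_eq_abs, abs_one, mul_one]
    rw [abs_le]
    constructor <;> linarith
end

section
/- Fix x > 0, s > 0, σ ∈ (1/2, 1), and let T = T(s,σ) ∈ (0,1] be defined by T = sup{t ∈ (0,1] : x(e^t − 1) − s√(e^{2t} − 1) < σ/(1+x)}. Then x² T ≤ 8(s² + 1). -/
open Set

theorem T_bound (x s σ T : ℝ) (hx : 0 < x) (hs : 0 < s) (hσ : σ ∈ Ioo (1/2 : ℝ) 1)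
    (hT : T = sSup {t ∈ Ioc (0:ℝ) 1 |
      x * (Real.exp t - 1) - s * Real.sqrt (Real.exp (2 * t) - 1) < σ / (1 + x)}) :
    x ^ 2 * T ≤ 8 * (s ^ 2 + 1) := by
  have hx2 : (0:ℝ) < x ^ 2 := by positivity
  have hbound : (0:ℝ) ≤ 8 * (s ^ 2 + 1) / x ^ 2 := by positivity
  have key : ∀ t ∈ {t ∈ Ioc (0:ℝ) 1 |
      x * (Real.exp t - 1) - s * Real.sqrt (Real.exp (2 * t) - 1) < σ / (1 + x)},
      t ≤ 8 * (s ^ 2 + 1) / x ^ 2 := by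
    rintro t ⟨⟨ht0, ht1⟩, hlt⟩
    rw [le_div_iff₀ hx2]
    set v : ℝ := Real.exp t - 1 with hv
    have hv0 : 0 < v := by
      have := Real.add_one_le_exp t
      simp only [hv]; linarith
    have hvt : t ≤ v := by
      have := Real.add_one_le_exp t
      simp [hv]; linarith
    have hE : Real.exp (2 * t) - 1 = v * (v + 2) := by
      have : Real.exp (2 * t) = Real.exp t * Real.exp t := by
        rw [two_mul, Real.exp_add]
      rw [this, hv]; ring
    have hexp3 : Real.exp t ≤ 3 := by
      have h1 : Real.exp t ≤ Real.exp 1 := Real.exp_le_exp.mpr ht1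
      have h2 : Real.exp 1 < 2.7182818286 := Real.exp_one_lt_d9
      linarith
    have hE4 : Real.exp (2 * t) - 1 ≤ 4 * v := by
      rw [hE]; nlinarith
    have hE0 : 0 ≤ Real.exp (2 * t) - 1 := by rw [hE]; nlinarith
    set w : ℝ := x * Real.sqrt v with hw
    have hw0 : 0 ≤ w := by positivity
    have hw2 : w ^ 2 = x ^ 2 * v := by
      rw [hw, mul_pow, Real.sq_sqrt hv0.le]
    have hsqrt : Real.sqrt (Real.exp (2 * t) - 1) ≤ 2 * Real.sqrt v := by
      have h4 : Real.sqrt (4 * v) = 2 * Real.sqrt v := by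
        rw [show (4:ℝ) * v = (2*Real.sqrt v)^2 by rw [mul_pow, Real.sq_sqrt hv0.le]; ring]
        exact Real.sqrt_sq (by positivity)
      calc Real.sqrt (Real.exp (2 * t) - 1) ≤ Real.sqrt (4 * v) :=
            Real.sqrt_le_sqrt hE4
        _ = 2 * Real.sqrt v := h4
    have h1x : (0:ℝ) < 1 + x := by linarith
    have hσx : σ / (1 + x) < 1 / x := by
      rw [div_lt_div_iff₀ h1x hx]
      nlinarith [hσ.2]
    have hlt' : x * v - s * Real.sqrt (Real.exp (2 * t) - 1) < 1 / x := hlt.trans hσx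
    have hmul : x * (x * v - s * Real.sqrt (Real.exp (2 * t) - 1)) < 1 := by
      have := mul_lt_mul_of_pos_left hlt' hx
      rwa [mul_one_div, div_self hx.ne'] at this
    have hkey : w ^ 2 < 1 + 2 * s * w := by
      have hs2 : s * (x * Real.sqrt (Real.exp (2 * t) - 1)) ≤ 2 * s * w := by
        rw [hw]
        nlinarith [mul_le_mul_of_nonneg_left hsqrt (show (0:ℝ) ≤ s * x by positivity)]
      nlinarith [hw2, hmul]
    nlinarith [sq_nonneg (w - 2 * s), hkey, hw2, hvt, sq_nonneg s]
  have hTle : T ≤ 8 * (s ^ 2 + 1) / x ^ 2 := by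
    rw [hT]; exact Real.sSup_le key hbound
  calc x ^ 2 * T ≤ x ^ 2 * (8 * (s ^ 2 + 1) / x ^ 2) :=
        mul_le_mul_of_nonneg_left hTle hx2.le
    _ = 8 * (s ^ 2 + 1) := by field_simp
end

section
/- Fix x > 0, s > 0, σ ∈ (1/2,1). For t ∈ (0,1] satisfying x(e^t − 1) − s√(e^{2t} − 1) < σ/(1+x) (so that x² t ≤ 8(s²+1)), the quantity F₊(t) = [ (x(e^t − 1) + s√(e^{2t} − 1)) ∧ (σ/(1+x)) ] / √(1 − e^{−2t}) satisfies F₊(t) ≤ C(s + 1) for an absolute constant C independent of x, s, σ, t. -/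
open Set


private lemma aux_q (q w s : ℝ) (hs : 0 < s) (hkey : q < 1 + 3 * s * w)
    (hw2 : w^2 ≤ 2 * q) : q ≤ 20 * (s+1)^2 := by
  nlinarith [sq_nonneg (3*s - w/2), sq_nonneg s, hs.le]

private lemma aux_sqle (a b : ℝ) (ha : 0 ≤ a) (hb : 0 ≤ b) (h : a^2 ≤ b^2) : a ≤ b := by
  have h1 : a = Real.sqrt (a^2) := (Real.sqrt_sq ha).symm
  have h2 : Real.sqrt (a^2) ≤ Real.sqrt (b^2) := Real.sqrt_le_sqrt h
  rw [Real.sqrt_sq hb] at h2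
  linarith [h1 ▸ h2]

private lemma aux_xt (X T S DD : ℝ) (hX : 0 ≤ X) (hT : 0 ≤ T) (hS : 0 < S) (hD : 0 ≤ DD)
    (hq : X^2 * T ≤ 20 * (S+1)^2) (hDget : T/4 ≤ DD^2) :
    X * T ≤ 9 * (S+1) * DD := by
  apply aux_sqle _ _ (by positivity) (by positivity)
  have e1 : X^2 * T * T ≤ 20*(S+1)^2 * T := mul_le_mul_of_nonneg_right hq hT
  have e2 : 81*(S+1)^2*(T/4) ≤ 81*(S+1)^2*DD^2 :=
    mul_le_mul_of_nonneg_left hDget (by positivity)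
  have e3 : 0 ≤ (S+1)^2 * T := by positivity
  nlinarith [e1, e2, e3]

set_option maxHeartbeats 1000000 in
theorem Fplus_bound :
    ∃ C > (0:ℝ), ∀ x s σ t : ℝ, 0 < x → 0 < s → σ ∈ Ioo (1/2 : ℝ) 1 →
      t ∈ Ioc (0:ℝ) 1 →
      x * (Real.exp t - 1) - s * Real.sqrt (Real.exp (2 * t) - 1) < σ / (1 + x) →
      min (x * (Real.exp t - 1) + s * Real.sqrt (Real.exp (2 * t) - 1)) (σ / (1 + x)) /
          Real.sqrt (1 - Real.exp (-2 * t)) ≤ C * (s + 1) := by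
  refine ⟨30, by norm_num, ?_⟩
  rintro x s σ t hx hs ⟨hσ1, hσ2⟩ ⟨ht0, ht1⟩ hlt
  have hneg : (-2 : ℝ) * t = -(2*t) := by ring
  rw [hneg] at *
  obtain ⟨D, hDdef⟩ : ∃ D, D = Real.sqrt (1 - Real.exp (-(2*t))) := ⟨_, rfl⟩
  rw [← hDdef]
  have hEpos : (0:ℝ) < Real.exp (2*t) := Real.exp_pos _
  have hEinv : Real.exp (-(2*t)) = (Real.exp (2*t))⁻¹ := Real.exp_neg _
  have hE1 : 1 + 2*t ≤ Real.exp (2*t) := by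
    have := Real.add_one_le_exp (2*t); linarith
  have hexplt : Real.exp (-(2*t)) < 1 := by
    rw [Real.exp_lt_one_iff]; linarith
  have hD2 : D^2 = 1 - Real.exp (-(2*t)) := by rw [hDdef]; exact Real.sq_sqrt (by linarith)
  have hDpos : 0 < D := by rw [hDdef]; exact Real.sqrt_pos.mpr (by linarith)
  have hE8 : Real.exp (2*t) < 8 := by
    have h1 : Real.exp (2*t) ≤ Real.exp 2 := Real.exp_le_exp.mpr (by linarith)
    have h2 : Real.exp 2 = Real.exp 1 * Real.exp 1 := by rw [← Real.exp_add]; norm_num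
    nlinarith [Real.exp_one_lt_d9, Real.exp_pos 1]
  -- lower bound on D^2 : D^2 ≥ t/4
  have hDget : t/4 ≤ D^2 := by
    rw [hD2, hEinv]
    have hinv : (Real.exp (2*t))⁻¹ * Real.exp (2*t) = 1 := inv_mul_cancel₀ (ne_of_gt hEpos)
    have h8 : (8:ℝ)⁻¹ < (Real.exp (2*t))⁻¹ := by
      exact inv_strictAnti₀ hEpos hE8
    nlinarith [inv_pos.mpr hEpos]
  -- upper bound : D^2 ≤ 2t
  have hDle : D^2 ≤ 2*t := by
    rw [hD2]
    have := Real.add_one_le_exp (-(2*t))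
    linarith
  -- sqrt identity
  have hsq : Real.sqrt (Real.exp (2*t) - 1) = Real.exp t * D := by
    have h : Real.exp (2*t) - 1 = (Real.exp t)^2 * (1 - Real.exp (-(2*t))) := by
      have h1 : Real.exp (2*t) = Real.exp t * Real.exp t := by
        rw [← Real.exp_add]; ring_nf
      rw [hEinv, h1]
      field_simp
    rw [h, Real.sqrt_mul (sq_nonneg _), Real.sqrt_sq (Real.exp_pos t).le, ← hDdef]
  rw [hsq] at hlt ⊢
  have het3 : Real.exp t ≤ 3 := by
    have h1 : Real.exp t ≤ Real.exp 1 := Real.exp_le_exp.mpr ht1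
    nlinarith [Real.exp_one_lt_d9]
  -- e^t - 1 ≤ t * e^t ≤ 3t
  have hA : x * (Real.exp t - 1) ≤ 3 * (x * t) := by
    have h1 : 1 - t ≤ Real.exp (-t) := by
      have := Real.add_one_le_exp (-t); linarith
    have h2 : Real.exp (-t) = (Real.exp t)⁻¹ := Real.exp_neg _
    have h3 : (Real.exp t)⁻¹ * Real.exp t = 1 := inv_mul_cancel₀ (Real.exp_ne_zero t)
    have h4 : Real.exp t - 1 ≤ t * Real.exp t := by nlinarith [Real.exp_pos t]
    have h5 : x * (Real.exp t - 1) ≤ x * (t * Real.exp t) :=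
      mul_le_mul_of_nonneg_left h4 hx.le
    have h6 : 0 ≤ x * t := by positivity
    nlinarith [h5, h6]
  -- key bound : x^2 * t ≤ 20 * (s+1)^2
  have hc : σ / (1 + x) < 1 / x := by
    rw [div_lt_div_iff₀ (by linarith) hx]
    nlinarith
  have hkey : x^2 * t < 1 + 3 * s * (x * D) := by
    have h1 : x * (Real.exp t - 1) - s * (Real.exp t * D) < 1 / x := lt_trans hlt hc
    have h2 : x * (x * (Real.exp t - 1) - s * (Real.exp t * D)) < x * (1/x) :=
      mul_lt_mul_of_pos_left h1 hx
    have h3 : x * (1/x) = 1 := by field_simp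
    have h4 : x^2 * t ≤ x^2 * (Real.exp t - 1) := by
      have ht' : t ≤ Real.exp t - 1 := by have := Real.add_one_le_exp t; linarith
      exact mul_le_mul_of_nonneg_left ht' (sq_nonneg x)
    have h6 : 0 ≤ s * (x * D) := by positivity
    have h5 : s * (x * (Real.exp t * D)) ≤ 3 * s * (x * D) := by
      nlinarith [mul_le_mul_of_nonneg_left het3 h6]
    have h7 : x * (x * (Real.exp t - 1) - s * (Real.exp t * D))
        = x^2 * (Real.exp t - 1) - s * (x * (Real.exp t * D)) := by ring
    linarith
  have hw2 : (x*D)^2 ≤ 2 * (x^2 * t) := by nlinarith [sq_nonneg x]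
  have hq : x^2 * t ≤ 20 * (s+1)^2 := aux_q _ _ _ hs hkey hw2
  -- final
  rw [div_le_iff₀ hDpos]
  have hmin : min (x * (Real.exp t - 1) + s * (Real.exp t * D)) (σ / (1 + x))
      ≤ x * (Real.exp t - 1) + s * (Real.exp t * D) := min_le_left _ _
  have hB : s * (Real.exp t * D) ≤ 3 * s * D := by
    have h6 : 0 ≤ s * D := by positivity
    nlinarith [mul_le_mul_of_nonneg_left het3 h6]
  have hxt : x * t ≤ 9 * (s+1) * D :=
    aux_xt x t s D hx.le ht0.le hs hDpos.le hq hDget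
  calc min (x * (Real.exp t - 1) + s * (Real.exp t * D)) (σ / (1 + x))
      ≤ x * (Real.exp t - 1) + s * (Real.exp t * D) := hmin
    _ ≤ 3 * (x*t) + 3 * s * D := by linarith
    _ ≤ 27 * (s+1) * D + 3 * s * D := by linarith
    _ ≤ 30 * (s+1) * D := by nlinarith [hDpos.le]
end
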